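/- Let g = ∑_c p(c)·G(c) + e with ‖e‖ ≤ ε, where p lies in the probability simplex, and suppose the matrix with columns G(c) has the property that ‖∑_c v(c)·G(c)‖ ≥ σ·‖v‖₂ for all v with ∑_c v(c) = 0, where σ > 0. Then any minimizer p̂ of q ↦ ‖g - ∑_c q(c)·G(c)‖ over the simplex satisfies ‖p̂ - p‖₂ ≤ 2ε/σ. -/
import Mathlib

theorem inference_error_bound {C d : ℕ}
    (p phat : EuclideanSpace ℝ (Fin C))
    (hp : (∀ c, 0 ≤ p c) ∧ ∑ c, p c = 1)
    (hphat : (∀ c, 0 ≤ phat c) ∧ ∑ c, phat c = 1)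
    (g e : EuclideanSpace ℝ (Fin d)) (G : Fin C → EuclideanSpace ℝ (Fin d))
    (ε : ℝ) (hg : g = ∑ c, p c • G c + e) (he : ‖e‖ ≤ ε)
    (σ : ℝ) (hσ : 0 < σ)
    (hsing : ∀ v : EuclideanSpace ℝ (Fin C), ∑ c, v c = 0 →
      σ * ‖v‖ ≤ ‖∑ c, v c • G c‖)
    (hmin : ∀ q : EuclideanSpace ℝ (Fin C), ((∀ c, 0 ≤ q c) ∧ ∑ c, q c = 1) →
      ‖g - ∑ c, phat c • G c‖ ≤ ‖g - ∑ c, q c • G c‖) :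
    ‖phat - p‖ ≤ 2 * ε / σ := by
  have hsum : ∑ c, (phat - p) c = 0 := by
    have : ∀ c, (phat - p) c = phat c - p c := fun c => rfl
    simp [this, Finset.sum_sub_distrib, hp.2, hphat.2]
  have key := hsing (phat - p) hsum
  have hexp : ∑ c, (phat - p) c • G c
      = (g - ∑ c, p c • G c) - (g - ∑ c, phat c • G c) := by
    have : ∀ c, (phat - p) c • G c = phat c • G c - p c • G c := by
      intro c; show (phat c - p c) • G c = _; rw [sub_smul]
    rw [Finset.sum_congr rfl fun c _ => this c, Finset.sum_sub_distrib]
    abel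
  have hge : ‖g - ∑ c, p c • G c‖ = ‖e‖ := by rw [hg]; simp
  have h1 : ‖g - ∑ c, phat c • G c‖ ≤ ε := by
    calc ‖g - ∑ c, phat c • G c‖ ≤ ‖g - ∑ c, p c • G c‖ := hmin p hp
    _ = ‖e‖ := hge
    _ ≤ ε := he
  have h2 : ‖∑ c, (phat - p) c • G c‖ ≤ 2 * ε := by
    rw [hexp]
    calc ‖(g - ∑ c, p c • G c) - (g - ∑ c, phat c • G c)‖
        ≤ ‖g - ∑ c, p c • G c‖ + ‖g - ∑ c, phat c • G c‖ := norm_sub_le _ _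
      _ ≤ ε + ε := by rw [hge]; exact add_le_add he h1
      _ = 2 * ε := by ring
  have := le_trans key h2
  rw [le_div_iff₀ hσ]
  linarith [this]
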